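/- Let ρ be the standard product-null state on ℂ²⊗ℂ² determined by a 3×3 positive semidefinite block H with tr H > 0. If h_{02} ≠ 0, then the partial transpose ρ^{Γ_B} with respect to the second factor is not positive semidefinite; in particular its principal 2×2 submatrix on span{|01⟩,|10⟩} has negative determinant −|h_{02}|²/(tr H)². -/

import Mathlib

open Matrix ComplexOrder

/-- Index map identifying |00⟩ ↦ 0, |10⟩ ↦ 1, |11⟩ ↦ 2 (the value on |01⟩ is irrelevant). -/
def idx3 : Fin 2 × Fin 2 → Fin 3 := fun p =>
  if p = (0, 0) then 0 else if p = (1, 0) then 1 else 2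

/-- The standard product-null state ρ = (1/tr H)·(H placed on span{|00⟩,|10⟩,|11⟩},
with zero |01⟩ row and column). -/
noncomputable def stdState (H : Matrix (Fin 3) (Fin 3) ℂ) :
    Matrix (Fin 2 × Fin 2) (Fin 2 × Fin 2) ℂ :=
  Matrix.of fun p q =>
    if p = ((0 : Fin 2), (1 : Fin 2)) ∨ q = ((0 : Fin 2), (1 : Fin 2)) then 0
    else H (idx3 p) (idx3 q) / H.trace

/-- Partial transpose with respect to the second (Bob) factor. -/
def ptB (M : Matrix (Fin 2 × Fin 2) (Fin 2 × Fin 2) ℂ) :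
    Matrix (Fin 2 × Fin 2) (Fin 2 × Fin 2) ℂ :=
  Matrix.of fun p q => M (p.1, q.2) (q.1, p.2)

/-! The |01⟩ diagonal entry of `ptB (stdState H)` vanishes while the (|01⟩, |10⟩) entry is
`h₀₂ / tr H ≠ 0`; but a positive semidefinite matrix with a zero diagonal entry has the whole
corresponding row zero. -/

theorem Matrix.PosSemidef.apply_eq_zero_of_diag_eq_zero {𝕜 n : Type*} [RCLike 𝕜] [Fintype n]
    {A : Matrix n n 𝕜} (hA : A.PosSemidef) {i : n} (hi : A i i = 0) (j : n) : A i j = 0 := by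
  classical
  have hcol : A *ᵥ Pi.single i 1 = 0 := (hA.dotProduct_mulVec_zero_iff _).mp <| by
    simpa [mulVec_single_one, dotProduct, Pi.single_apply] using hi
  have hji : A j i = 0 := by simpa [mulVec_single_one] using congrFun hcol j
  rw [← hA.1.apply i j, hji, star_zero]

section ptB_stdState

variable (H : Matrix (Fin 3) (Fin 3) ℂ)

theorem ptB_stdState_apply_01_01 : ptB (stdState H) (0, 1) (0, 1) = 0 := by
  simp [ptB, stdState]

theorem ptB_stdState_apply_10_10 : ptB (stdState H) (1, 0) (1, 0) = H 1 1 / H.trace := by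
  simp [ptB, stdState, idx3]

theorem ptB_stdState_apply_01_10 : ptB (stdState H) (0, 1) (1, 0) = H 0 2 / H.trace := by
  simp [ptB, stdState, idx3]

theorem ptB_stdState_apply_10_01 : ptB (stdState H) (1, 0) (0, 1) = H 2 0 / H.trace := by
  simp [ptB, stdState, idx3]

end ptB_stdState

theorem stmt10 (H : Matrix (Fin 3) (Fin 3) ℂ) (hH : H.PosSemidef)
    (htr : 0 < H.trace.re) (h02 : H 0 2 ≠ 0) :
    ptB (stdState H) (0, 1) (0, 1) * ptB (stdState H) (1, 0) (1, 0)
      - ptB (stdState H) (0, 1) (1, 0) * ptB (stdState H) (1, 0) (0, 1)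
      = -((‖H 0 2‖ ^ 2 : ℝ) : ℂ) / H.trace ^ 2 ∧
    ¬ (ptB (stdState H)).PosSemidef := by
  refine ⟨?_, fun hρ => h02 ?_⟩
  · have hnorm : H 0 2 * H 2 0 = ((‖H 0 2‖ ^ 2 : ℝ) : ℂ) := by
      rw [← hH.1.apply 2 0, Complex.star_def, Complex.mul_conj, Complex.normSq_eq_norm_sq]
    rw [ptB_stdState_apply_01_01, ptB_stdState_apply_10_10, ptB_stdState_apply_01_10,
      ptB_stdState_apply_10_01, zero_mul, zero_sub, div_mul_div_comm, hnorm, ← sq, neg_div]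
  · have h := hρ.apply_eq_zero_of_diag_eq_zero (ptB_stdState_apply_01_01 H) (1, 0)
    rw [ptB_stdState_apply_01_10, div_eq_zero_iff] at h
    exact h.resolve_right fun h0 => htr.ne' (by rw [h0, Complex.zero_re])
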